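/- Every highest weight valued-set tableau of shape λ has the property that its i-th row contains only entries equal to i. -/

import Mathlib

/-- Scanning left to right (`+` for letter `i`, `-` for `i+1`, canceling ordered pairs
`-+`), returns (number of uncanceled `+`, number of uncanceled `-`). -/
def sigFold (i : ℕ) (w : List ℕ) : ℕ × ℕ :=
  w.foldl (fun pm a =>
    if a = i then (if 0 < pm.2 then (pm.1, pm.2 - 1) else (pm.1 + 1, pm.2))
    else if a = i + 1 then (pm.1, pm.2 + 1) else pm) (0, 0)

/-- Position of the rightmost uncanceled `+` (a letter `i`). -/
def fPos (i : ℕ) (w : List ℕ) : Option ℕ :=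
  ((List.range w.length).filter
    (fun j => decide (w[j]? = some i ∧ (sigFold i (w.take j)).2 = 0))).getLast?

/-- Position of the leftmost uncanceled `-` (a letter `i+1`). -/
def ePos (i : ℕ) (w : List ℕ) : Option ℕ :=
  ((List.range w.length).filter
    (fun j => decide (w[j]? = some (i + 1) ∧ (sigFold i (w.drop (j + 1))).1 = 0))).head?

/-- `sh` is a partition: weakly decreasing list of positive integers. -/
def IsPartition (sh : List ℕ) : Prop :=
  sh.Pairwise (· ≥ ·) ∧ ∀ x ∈ sh, 0 < x

/-- The box in row `r`, column `c` (both 0-indexed) belongs to the Young diagram of `sh`. -/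
abbrev InShape (sh : List ℕ) (r c : ℕ) : Prop := c < sh.getD r 0

/-- Number of boxes in column `c` of the shape `sh`. -/
def colHeight (sh : List ℕ) (c : ℕ) : ℕ := (sh.filter (fun p => decide (c < p))).length

/-! Valued-set tableaux. -/

/-- A semistandard Young tableau with each row partitioned into contiguous groups:
`entry` gives the entries, and `start r c = true` marks that box `(r, c)` is the
leftmost box (the buoy) of its group. -/
structure VST where
  entry : ℕ → ℕ → ℕ
  start : ℕ → ℕ → Bool

/-- A valued-set tableau of shape `sh` with entries in `{1, …, n}`: a semistandard Young
tableau of shape `sh` whose rows are split into contiguous groups of equal entries. -/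
def IsVST (n : ℕ) (sh : List ℕ) (T : VST) : Prop :=
  (∀ r c, ¬ InShape sh r c → T.entry r c = 0 ∧ T.start r c = false) ∧
  (∀ r c, InShape sh r c → 1 ≤ T.entry r c ∧ T.entry r c ≤ n) ∧
  (∀ r c, InShape sh r (c + 1) → T.entry r c ≤ T.entry r (c + 1)) ∧
  (∀ r c, InShape sh (r + 1) c → T.entry r c < T.entry (r + 1) c) ∧
  (∀ r, InShape sh r 0 → T.start r 0 = true) ∧
  (∀ r c, InShape sh r (c + 1) → T.start r (c + 1) = false →
    T.entry r (c + 1) = T.entry r c)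

/-- Tagged buoy reading word: the buoy entries, columns left to right, bottom to top
within each column; each letter is tagged with its box. -/
def vstTagged (sh : List ℕ) (T : VST) : List (ℕ × ℕ × ℕ) :=
  ((List.range (sh.headD 0)).map (fun c =>
    (List.range (colHeight sh c)).reverse.filterMap (fun r =>
      if T.start r c then some (T.entry r c, r, c) else none))).flatten

/-- The (buoy) reading word of a valued-set tableau. -/
def vstWord (sh : List ℕ) (T : VST) : List ℕ := (vstTagged sh T).map (·.1)

/-- The column of the anchor (rightmost box) of the group whose buoy is in box `(r, c)`. -/
def anchorCol (sh : List ℕ) (T : VST) (r c : ℕ) : ℕ :=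
  (((List.range (sh.getD r 0)).filter (fun c' =>
    decide (c ≤ c' ∧ (¬ InShape sh r (c' + 1) ∨ T.start r (c' + 1) = true)))).headD c)

/-- The crystal operator `f_i` on valued-set tableaux, acting on the group `g` of the
rightmost uncanceled `+`: if the entry immediately below the anchor of `g` is an `i+1`,
move the divider between `g` and the group immediately to the left of `g` one step down;
otherwise change every `i` in `g` to an `i+1`. -/
def vstF (sh : List ℕ) (i : ℕ) (T : VST) : Option VST :=
  (fPos i (vstWord sh T)).map (fun j =>
    let t := (vstTagged sh T).getD j (0, 0, 0)
    let r := t.2.1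
    let cs := t.2.2
    let ce := anchorCol sh T r cs
    if InShape sh (r + 1) ce ∧ T.entry (r + 1) ce = i + 1 then
      { T with start := fun r' c' =>
          if r' = r ∧ c' = cs then false
          else if r' = r + 1 ∧ c' = cs then true
          else T.start r' c' }
    else
      { T with entry := fun r' c' =>
          if r' = r ∧ cs ≤ c' ∧ c' ≤ ce then i + 1 else T.entry r' c' })

/-- The crystal operator `e_i` on valued-set tableaux, acting on the group `g` of the
leftmost uncanceled `-`: if the entry immediately above the anchor of `g` is an `i`,
move the divider between `g` and the group immediately to the left of `g` one step up;
otherwise change every `i+1` in `g` to an `i`. -/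
def vstE (sh : List ℕ) (i : ℕ) (T : VST) : Option VST :=
  (ePos i (vstWord sh T)).map (fun j =>
    let t := (vstTagged sh T).getD j (0, 0, 0)
    let r := t.2.1
    let cs := t.2.2
    let ce := anchorCol sh T r cs
    if 0 < r ∧ T.entry (r - 1) ce = i then
      { T with start := fun r' c' =>
          if r' = r ∧ c' = cs then false
          else if r' + 1 = r ∧ c' = cs then true
          else T.start r' c' }
    else
      { T with entry := fun r' c' =>
          if r' = r ∧ cs ≤ c' ∧ c' ≤ ce then i else T.entry r' c' })

/-- A valued-set tableau is highest weight if it is killed by all raising operators. -/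
def VstHW (sh : List ℕ) (T : VST) : Prop := ∀ i, 1 ≤ i → vstE sh i T = none

/-!
Induct on the value of an entry. If an entry `i + 1` lies strictly above row `i + 1`
(1-indexed), then by induction every entry `i` lies in row `i`, weakly below that box, so every
letter `i` of the reading word is read before the buoy of its group, another `i + 1`. With no `+`
to its right that `-` is uncanceled, so `e_i T ≠ 0`.
-/

def sigStep (i : ℕ) (pm : ℕ × ℕ) (a : ℕ) : ℕ × ℕ :=
  if a = i then (if 0 < pm.2 then (pm.1, pm.2 - 1) else (pm.1 + 1, pm.2))
  else if a = i + 1 then (pm.1, pm.2 + 1) else pm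

theorem sigFold_eq_foldl (i : ℕ) (w : List ℕ) : sigFold i w = w.foldl (sigStep i) (0, 0) := rfl

theorem foldl_sigStep_fst_of_not_mem {i : ℕ} {w : List ℕ} (h : i ∉ w) (pm : ℕ × ℕ) :
    (w.foldl (sigStep i) pm).1 = pm.1 := by
  induction w generalizing pm with
  | nil => rfl
  | cons a w ih =>
    rw [List.mem_cons, not_or] at h
    rw [List.foldl_cons, ih h.2, sigStep, if_neg (Ne.symm h.1)]
    split_ifs <;> rfl

theorem ePos_ne_none {i j : ℕ} {w : List ℕ} (hj : w[j]? = some (i + 1)) (hi : i ∉ w.drop (j + 1)) :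
    ePos i w ≠ none := by
  have hlt : j < w.length := (List.getElem?_eq_some_iff.mp hj).1
  have hfold : (sigFold i (w.drop (j + 1))).1 = 0 := by
    rw [sigFold_eq_foldl, foldl_sigStep_fst_of_not_mem hi]
  rw [ePos, Ne, List.head?_eq_none_iff]
  exact List.ne_nil_of_mem (List.mem_filter.mpr ⟨List.mem_range.mpr hlt, by simp [hj, hfold]⟩)

section Shape

variable {sh : List ℕ}

theorem getD_antitone_of_pairwise (hs : sh.Pairwise (· ≥ ·)) {r r' : ℕ} (hrr : r ≤ r') :
    sh.getD r' 0 ≤ sh.getD r 0 := by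
  by_cases hr' : r' < sh.length
  · rw [List.getD_eq_getElem _ _ hr', List.getD_eq_getElem _ _ (by omega)]
    rcases hrr.eq_or_lt with rfl | hlt
    · rfl
    · exact List.pairwise_iff_getElem.mp hs r r' _ hr' hlt
  · rw [List.getD_eq_default _ _ (by omega)]
    exact Nat.zero_le _

theorem InShape.of_row_le (hs : sh.Pairwise (· ≥ ·)) {r r' c : ℕ} (hrr : r ≤ r')
    (h : InShape sh r' c) : InShape sh r c :=
  lt_of_lt_of_le h (getD_antitone_of_pairwise hs hrr)

theorem InShape.of_col_le {r c c' : ℕ} (hcc : c ≤ c') (h : InShape sh r c') : InShape sh r c :=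
  lt_of_le_of_lt hcc h

theorem lt_colHeight_iff (hs : sh.Pairwise (· ≥ ·)) {r c : ℕ} :
    r < colHeight sh c ↔ InShape sh r c := by
  induction sh generalizing r with
  | nil => simp [colHeight]
  | cons a t ih =>
    have hs' := List.pairwise_cons.mp hs
    by_cases hca : c < a
    · have hheight : colHeight (a :: t) c = colHeight t c + 1 := by
        simp [colHeight, hca]
      cases r with
      | zero => simpa [hheight] using hca
      | succ r => simpa [hheight] using ih hs'.2
    · have hheight : colHeight (a :: t) c = 0 := by
        simp only [colHeight, List.filter_cons, hca, decide_false, Bool.false_eq_true, if_false,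
          List.length_eq_zero_iff, List.filter_eq_nil_iff, decide_eq_true_eq]
        exact fun x hx hcx => hca (lt_of_lt_of_le hcx (hs'.1 x hx))
      simp only [hheight, Nat.not_lt_zero, false_iff]
      exact fun h => hca (h.of_row_le hs (Nat.zero_le r))

end Shape

namespace IsVST

variable {n : ℕ} {sh : List ℕ} {T : VST}

theorem entry_le_of_col_le (hT : IsVST n sh T) {r c c' : ℕ} (hcc : c ≤ c')
    (h : InShape sh r c') : T.entry r c ≤ T.entry r c' := by
  induction c', hcc using Nat.le_induction with
  | base => exact le_rfl
  | succ d hcd ih => exact (ih (h.of_col_le d.le_succ)).trans (hT.2.2.1 r d h)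

theorem entry_add_le_entry_below (hT : IsVST n sh T) (hs : sh.Pairwise (· ≥ ·)) {r k c : ℕ}
    (h : InShape sh (r + k) c) : T.entry r c + k ≤ T.entry (r + k) c := by
  induction k with
  | zero => exact le_rfl
  | succ k ih =>
    have hstep := hT.2.2.2.1 (r + k) c h
    have := ih (h.of_row_le hs (r + k).le_succ)
    change T.entry r c + (k + 1) ≤ T.entry (r + k + 1) c
    omega

theorem row_add_one_le_entry (hT : IsVST n sh T) (hs : sh.Pairwise (· ≥ ·)) {r c : ℕ}
    (h : InShape sh r c) : r + 1 ≤ T.entry r c := by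
  have hfirst := (hT.2.1 0 c (h.of_row_le hs r.zero_le)).1
  have := hT.entry_add_le_entry_below hs (r := 0) (k := r) (by simpa using h)
  simp only [zero_add] at this
  omega

theorem entry_le_of_le (hT : IsVST n sh T) (hs : sh.Pairwise (· ≥ ·)) {r r' c c' : ℕ}
    (hrr : r ≤ r') (hcc : c ≤ c') (h : InShape sh r' c') : T.entry r c ≤ T.entry r' c' := by
  obtain ⟨k, rfl⟩ := Nat.exists_eq_add_of_le hrr
  calc T.entry r c ≤ T.entry r c + k := Nat.le_add_right _ _
    _ ≤ T.entry (r + k) c := hT.entry_add_le_entry_below hs (h.of_col_le hcc)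
    _ ≤ T.entry (r + k) c' := hT.entry_le_of_col_le hcc h

theorem exists_buoy (hT : IsVST n sh T) {r c : ℕ} (h : InShape sh r c) :
    ∃ c₀ ≤ c, T.start r c₀ = true ∧ T.entry r c₀ = T.entry r c := by
  induction c with
  | zero => exact ⟨0, le_rfl, hT.2.2.2.2.1 r h, rfl⟩
  | succ c ih =>
    by_cases hst : T.start r (c + 1) = true
    · exact ⟨c + 1, le_rfl, hst, rfl⟩
    · obtain ⟨c₀, hc₀, hst₀, hent₀⟩ := ih (h.of_col_le c.le_succ)
      refine ⟨c₀, hc₀.trans c.le_succ, hst₀, ?_⟩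
      rw [hent₀, hT.2.2.2.2.2 r c h (by simpa using hst)]

end IsVST

section ReadingWord

variable {sh : List ℕ} {T : VST}

theorem mem_vstTagged (hs : sh.Pairwise (· ≥ ·)) {e r c : ℕ} :
    (e, r, c) ∈ vstTagged sh T ↔ InShape sh r c ∧ T.start r c = true ∧ e = T.entry r c := by
  simp only [vstTagged, List.mem_flatten, List.mem_map, exists_exists_and_eq_and,
    List.mem_filterMap, List.mem_reverse, List.mem_range, lt_colHeight_iff hs]
  constructor
  · rintro ⟨c', -, r', hr', hsome⟩
    split_ifs at hsome with hst
    cases hsome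
    exact ⟨hr', hst, rfl⟩
  · rintro ⟨hin, hst, rfl⟩
    refine ⟨c, ?_, r, hin, by simp [hst]⟩
    cases sh with
    | nil => simp at hin
    | cons a t => exact hin.of_row_le hs r.zero_le

/-- The reading order on boxes `(row, column)`: columns left to right, each bottom to top. -/
def ReadsBefore (p q : ℕ × ℕ) : Prop := p.2 < q.2 ∨ (p.2 = q.2 ∧ q.1 < p.1)

theorem vstTagged_pairwise_readsBefore :
    (vstTagged sh T).Pairwise (fun x y => ReadsBefore x.2 y.2) := by
  rw [vstTagged, List.pairwise_flatten, List.pairwise_map]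
  constructor
  · simp only [List.mem_map]
    rintro _ ⟨c, -, rfl⟩
    rw [List.pairwise_filterMap, List.pairwise_reverse]
    refine List.pairwise_lt_range.imp fun {r r'} hrr x hx y hy => ?_
    split_ifs at hx hy
    cases hx
    cases hy
    exact Or.inr ⟨rfl, hrr⟩
  · refine List.pairwise_lt_range.imp fun {c c'} hcc x hx y hy => ?_
    simp only [List.mem_filterMap] at hx hy
    obtain ⟨r, -, hx⟩ := hx
    obtain ⟨r', -, hy⟩ := hy
    split_ifs at hx hy
    cases hx
    cases hy
    exact Or.inl hcc

end ReadingWord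

theorem IsVST.ePos_vstWord_ne_none {n : ℕ} {sh : List ℕ} {T : VST} (hT : IsVST n sh T)
    (hs : sh.Pairwise (· ≥ ·)) {i r c : ℕ}
    (hrow : ∀ r' c', InShape sh r' c' → T.entry r' c' = i → r' + 1 = i)
    (hr : r < i) (hin : InShape sh r c) (hent : T.entry r c = i + 1) :
    ePos i (vstWord sh T) ≠ none := by
  obtain ⟨c₀, hc₀, hst, hent₀⟩ := hT.exists_buoy hin
  have hbuoy : (i + 1, r, c₀) ∈ vstTagged sh T :=
    (mem_vstTagged hs).mpr ⟨hin.of_col_le hc₀, hst, (hent₀.trans hent).symm⟩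
  obtain ⟨j, hj⟩ := List.mem_iff_getElem?.mp hbuoy
  have hbuoy_take : (i + 1, r, c₀) ∈ (vstTagged sh T).take (j + 1) :=
    List.mem_iff_getElem?.mpr ⟨j, by simpa [List.getElem?_take] using hj⟩
  refine ePos_ne_none (j := j) (by simp [vstWord, hj]) ?_
  rw [vstWord, ← List.map_drop]
  simp only [List.mem_map, not_exists, not_and]
  rintro ⟨e, r', c'⟩ hlater rfl
  have hbefore : ReadsBefore (r, c₀) (r', c') :=
    vstTagged_pairwise_readsBefore.rel_of_mem_take_of_mem_drop hbuoy_take hlater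
  obtain ⟨hin', -, rfl⟩ := (mem_vstTagged hs).mp (List.mem_of_mem_drop hlater)
  have hrow' := hrow r' c' hin' rfl
  dsimp only [ReadsBefore] at hbefore
  rcases hbefore with hcc | ⟨rfl, hrr⟩
  · have := hT.entry_le_of_le hs (show r ≤ r' by omega) hcc.le hin'
    omega
  · omega

/-- Every highest weight valued-set tableau of shape `λ` has all entries
of its `i`-th row (1-indexed) equal to `i`. -/
theorem vst_highest_weight_rows
    (n : ℕ) (lam : List ℕ) (hlam : IsPartition lam)
    (T : VST) (hT : IsVST n lam T) (hhw : VstHW lam T) :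
    ∀ r c, InShape lam r c → T.entry r c = r + 1 := by
  obtain ⟨hs, -⟩ := hlam
  suffices h : ∀ v r c, InShape lam r c → T.entry r c = v → v = r + 1 from
    fun r c hin => h _ r c hin rfl
  intro v
  induction v using Nat.strong_induction_on with
  | _ v ih =>
  intro r c hin hv
  by_contra hne
  have hlt : r + 1 < v := lt_of_le_of_ne (hv ▸ hT.row_add_one_le_entry hs hin) (Ne.symm hne)
  obtain ⟨i, rfl⟩ : ∃ i, v = i + 1 := ⟨v - 1, by omega⟩
  have hrow : ∀ r' c', InShape lam r' c' → T.entry r' c' = i → r' + 1 = i :=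
    fun r' c' hin' hent' => (ih i i.lt_succ_self r' c' hin' hent').symm
  exact hT.ePos_vstWord_ne_none hs hrow (by omega) hin hv <|
    by simpa [vstE] using hhw i (by omega)
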